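/- arXiv:1301.5630 — 3 statements merged into one kernel-verified Lean document; each statement's English description precedes it below -/
import Mathlib

section
/- Fix s > 0. Any s-thick partition structure (P_ω)_{ω∈T} on a complete metric space (Z,D) admits a substructure (P_ω)_{ω∈T̃}, where T̃ ⊆ T is a subtree, whose limit set π(T̃(∞)) is Ahlfors s-regular; moreover T̃ can be chosen so that for each ω ∈ T̃, the set of children T̃(ω) is an initial segment of T(ω). -/
open Metric MeasureTheory

/-- The initial segment of length `n` of an infinite string `ω : ℕ → ℕ`, as a list. -/
def pre (ω : ℕ → ℕ) (n : ℕ) : List ℕ := List.ofFn (fun i : Fin n => ω i)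

/-- The limit set of the substructure indexed by the subtree `T'`: all points lying on some
infinite branch of `T'`. -/
def limitSet {Z : Type*} [MetricSpace Z] (T' : Set (List ℕ)) (P : List ℕ → Set Z) : Set Z :=
  {w : Z | ∃ ω : ℕ → ℕ, (∀ n : ℕ, pre ω n ∈ T') ∧ ∀ n : ℕ, w ∈ P (pre ω n)}

/-!
Give each node `ω` the weight `D_ω ^ s`. Going down the tree, keep below a node only its first
children, just enough of them for their weights to exceed the mass already given to the node,
and split that mass among them in proportion to their weights. Thickness makes this possible,
and since a child weighs at most `λ ^ s` times its parent, the mass `m ω` of every kept node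
stays between `(1 - λ ^ s) D_ω ^ s` and `D_ω ^ s`.

The kept nodes form a finitely branching subtree without leaves. Its limit set is compact and
every cell is relatively open in it, so a countable cover of a cell reduces to a finite cover by
cells, on which the mass is subadditive. Hence the metric outer measure built from the cell
masses gives each cell exactly its mass. Finally, a closed ball of radius `r < 1` centred on the
limit set contains a cell of diameter comparable to `r`, and by the separation condition it meets
the limit set inside another such cell; so its measure is comparable to `r ^ s`.
-/

open scoped ENNReal

theorem pre_succ (β : ℕ → ℕ) (n : ℕ) : pre β (n + 1) = pre β n ++ [β n] := by
  rw [pre, List.ofFn_succ']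
  simp [pre, List.concat_eq_append]

theorem length_pre (β : ℕ → ℕ) (n : ℕ) : (pre β n).length = n := by
  simp [pre]

theorem pre_prefix_pre (β : ℕ → ℕ) {m n : ℕ} (h : m ≤ n) : pre β m <+: pre β n := by
  induction n, h using Nat.le_induction with
  | base => exact List.prefix_rfl
  | succ n _ ih => exact ih.trans (pre_succ β n ▸ List.prefix_append _ _)

theorem exists_pre_eq_of_prefix_chain {τ : ℕ → List ℕ} (hlen : ∀ n, (τ n).length = n)
    (hchain : ∀ n, τ n <+: τ (n + 1)) : ∃ β : ℕ → ℕ, ∀ n, pre β n = τ n := by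
  refine ⟨fun n => (τ (n + 1)).getD n 0, fun n => ?_⟩
  induction n with
  | zero => exact (List.length_eq_zero_iff.1 (hlen 0)).symm
  | succ n ih =>
    obtain ⟨t, ht⟩ := hchain n
    have ht1 : t.length = 1 := by
      have := congrArg List.length ht
      simp only [List.length_append, hlen] at this
      omega
    obtain ⟨b, rfl⟩ := List.length_eq_one_iff.1 ht1
    rw [pre_succ, ih, ← ht]
    simp [List.getD_eq_getElem?_getD, hlen]

theorem exists_branch_of_forall_exists_append {T' : Set (List ℕ)}
    (hpref : ∀ ω ∈ T', ∀ τ, τ <+: ω → τ ∈ T') (hchild : ∀ ω ∈ T', ∃ a, ω ++ [a] ∈ T')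
    {ω : List ℕ} (hω : ω ∈ T') : ∃ β : ℕ → ℕ, (∀ n, pre β n ∈ T') ∧ pre β ω.length = ω := by
  choose f hf using fun ρ : T' => hchild ρ.1 ρ.2
  let c : ℕ → T' := fun k => Nat.rec ⟨ω, hω⟩ (fun _ ρ => ⟨ρ.1 ++ [f ρ], hf ρ⟩) k
  have hc_succ : ∀ k, (c (k + 1)).1 = (c k).1 ++ [f (c k)] := fun _ => rfl
  have hc_len : ∀ k, (c k).1.length = ω.length + k := by
    intro k
    induction k with
    | zero => rfl
    | succ k ih => rw [hc_succ, List.length_append, ih]; rfl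
  have hc_mono : ∀ {j k}, j ≤ k → (c j).1 <+: (c k).1 := by
    intro j k hjk
    induction k, hjk using Nat.le_induction with
    | base => exact List.prefix_rfl
    | succ k _ ih => exact ih.trans (hc_succ k ▸ List.prefix_append _ _)
  obtain ⟨β, hβ⟩ := exists_pre_eq_of_prefix_chain (τ := fun n => (c n).1.take n)
    (fun n => by simp [hc_len])
    (fun n => List.prefix_take_iff.2
      ⟨(List.take_prefix _ _).trans (hc_mono n.le_succ), by simp⟩)
  refine ⟨β, fun n => hβ n ▸ hpref _ (c n).2 _ (List.take_prefix _ _), ?_⟩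
  rw [hβ]
  exact (List.prefix_iff_eq_take.1 (hc_mono (Nat.zero_le ω.length))).symm

theorem exists_lt_sum_range_of_ofReal_lt_tsum {x : ℕ → ℝ} (hx : ∀ a, 0 ≤ x a) {t : ℝ}
    (ht : ENNReal.ofReal t < ∑' a, ENNReal.ofReal (x a)) :
    ∃ N, t < ∑ a ∈ Finset.range (N + 1), x a := by
  rw [ENNReal.tsum_eq_iSup_nat, lt_iSup_iff] at ht
  obtain ⟨N, hN⟩ := ht
  rw [← ENNReal.ofReal_sum_of_nonneg fun a _ => hx a, ENNReal.ofReal_lt_ofReal_iff'] at hN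
  exact ⟨N, hN.1.trans_le (by rw [Finset.sum_range_succ]; linarith [hx N])⟩

theorem sum_range_succ_le_of_forall_lt {x : ℕ → ℝ} {t : ℝ} (ht : 0 ≤ t) {N : ℕ}
    (hN : ∀ K < N, ∑ a ∈ Finset.range (K + 1), x a ≤ t) :
    ∑ a ∈ Finset.range (N + 1), x a ≤ t + x N := by
  cases N with
  | zero => simpa using ht
  | succ K => rw [Finset.sum_range_succ]; linarith [hN K K.lt_succ_self]

theorem exists_first_le {d : ℕ → ℝ} {r : ℝ} (h : ∃ n, d n ≤ r) :
    ∃ n, d n ≤ r ∧ ∀ m, n = m + 1 → r < d m := by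
  classical
  exact ⟨Nat.find h, Nat.find_spec h, fun m hm => not_le.1 (Nat.find_min h (by omega))⟩

/-! ### Pruning a thick weighted tree -/

structure WeightedTree where
  T : Set (List ℕ)
  w : List ℕ → ℝ
  θ : ℝ
  nil_mem : [] ∈ T
  w_pos : ∀ ω ∈ T, 0 < w ω
  θ_pos : 0 < θ
  θ_lt_one : θ < 1
  w_append_le : ∀ ω ∈ T, ∀ a, ω ++ [a] ∈ T → w (ω ++ [a]) ≤ θ * w ω
  ofReal_w_le_tsum : ∀ ω ∈ T,
    ENNReal.ofReal (w ω) ≤ ∑' a : {a : ℕ // ω ++ [a] ∈ T}, ENNReal.ofReal (w (ω ++ [a.1]))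

namespace WeightedTree

variable (W : WeightedTree)

open Classical in
noncomputable def childWeight (ω : List ℕ) (a : ℕ) : ℝ :=
  if ω ++ [a] ∈ W.T then W.w (ω ++ [a]) else 0

noncomputable def childSum (ω : List ℕ) (N : ℕ) : ℝ :=
  ∑ a ∈ Finset.range (N + 1), W.childWeight ω a

/-- The children `a ≤ W.cutoff ω t` are those kept below a node `ω` of mass `t`. -/
noncomputable def cutoff (ω : List ℕ) (t : ℝ) : ℕ :=
  sInf {N | t < W.childSum ω N}

noncomputable def massStep (ω : List ℕ) (t : ℝ) (a : ℕ) : ℝ :=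
  if a ≤ W.cutoff ω t then t * W.childWeight ω a / W.childSum ω (W.cutoff ω t) else 0

/-- Defined on reversed words, so that the mass of `ω ++ [a]` is computed from that of `ω`. -/
noncomputable def massRev : List ℕ → ℝ
  | [] => (1 - W.θ) * W.w []
  | a :: ρ => W.massStep ρ.reverse (massRev ρ) a

noncomputable def mass (ω : List ℕ) : ℝ := W.massRev ω.reverse

def pruned : Set (List ℕ) := {ω | 0 < W.mass ω}

variable {W}

theorem childWeight_nonneg (ω : List ℕ) (a : ℕ) : 0 ≤ W.childWeight ω a := by
  unfold childWeight
  split_ifs with h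
  exacts [(W.w_pos _ h).le, le_rfl]

theorem childWeight_le {ω : List ℕ} (hω : ω ∈ W.T) (a : ℕ) :
    W.childWeight ω a ≤ W.θ * W.w ω := by
  unfold childWeight
  split_ifs with h
  exacts [W.w_append_le ω hω a h, mul_nonneg W.θ_pos.le (W.w_pos ω hω).le]

theorem childWeight_le_childSum (ω : List ℕ) {a N : ℕ} (ha : a ≤ N) :
    W.childWeight ω a ≤ W.childSum ω N :=
  Finset.single_le_sum (fun b _ => childWeight_nonneg ω b) (Finset.mem_range.2 (by omega))

theorem cutoff_spec {ω : List ℕ} (hω : ω ∈ W.T) {t : ℝ} (ht0 : 0 ≤ t) (ht : t < W.w ω) :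
    t < W.childSum ω (W.cutoff ω t) ∧ W.childSum ω (W.cutoff ω t) ≤ t + W.θ * W.w ω := by
  have hthick : ENNReal.ofReal t < ∑' a, ENNReal.ofReal (W.childWeight ω a) := by
    calc ENNReal.ofReal t < ENNReal.ofReal (W.w ω) :=
          (ENNReal.ofReal_lt_ofReal_iff_of_nonneg ht0).2 ht
      _ ≤ _ := W.ofReal_w_le_tsum ω hω
      _ = ∑' a, ENNReal.ofReal (W.childWeight ω a) := by
        refine (tsum_subtype {a | ω ++ [a] ∈ W.T} fun a => ENNReal.ofReal (W.w (ω ++ [a]))).trans ?_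
        congr 1 with a
        by_cases ha : ω ++ [a] ∈ W.T <;> simp [Set.indicator, childWeight, ha]
  refine ⟨Nat.sInf_mem (exists_lt_sum_range_of_ofReal_lt_tsum (childWeight_nonneg ω) hthick), ?_⟩
  have hmin : ∀ K < W.cutoff ω t, W.childSum ω K ≤ t := fun K hK =>
    not_lt.1 (Nat.notMem_of_lt_sInf hK)
  exact (sum_range_succ_le_of_forall_lt ht0 hmin).trans
    (by linarith [childWeight_le hω (W.cutoff ω t)])

theorem mass_nil : W.mass [] = (1 - W.θ) * W.w [] := rfl

theorem mass_append_singleton (ω : List ℕ) (a : ℕ) :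
    W.mass (ω ++ [a]) = W.massStep ω (W.mass ω) a := by
  simp [mass, massRev]

theorem massStep_nonneg (ω : List ℕ) {t : ℝ} (ht : 0 ≤ t) (a : ℕ) : 0 ≤ W.massStep ω t a := by
  unfold massStep
  split_ifs
  · exact div_nonneg (mul_nonneg ht (childWeight_nonneg ω a))
      (Finset.sum_nonneg fun b _ => childWeight_nonneg ω b)
  · exact le_rfl

theorem mass_nonneg (ω : List ℕ) : 0 ≤ W.mass ω := by
  induction ω using List.reverseRecOn with
  | nil => exact mul_nonneg (sub_nonneg.2 W.θ_lt_one.le) (W.w_pos [] W.nil_mem).le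
  | append_singleton ω a ih => rw [mass_append_singleton]; exact massStep_nonneg ω ih a

theorem nil_mem_pruned : [] ∈ W.pruned :=
  mul_pos (sub_pos.2 W.θ_lt_one) (W.w_pos [] W.nil_mem)

theorem mem_pruned_of_append {ω : List ℕ} {a : ℕ} (h : ω ++ [a] ∈ W.pruned) : ω ∈ W.pruned := by
  refine (mass_nonneg ω).lt_of_ne fun h0 => (show 0 < W.mass (ω ++ [a]) from h).ne' ?_
  rw [mass_append_singleton, ← h0]
  simp [massStep]

theorem mem_pruned_of_prefix {ω τ : List ℕ} (hω : ω ∈ W.pruned) (hτ : τ <+: ω) :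
    τ ∈ W.pruned := by
  induction ω using List.reverseRecOn with
  | nil => rwa [List.prefix_nil.1 hτ]
  | append_singleton ω a ih =>
    rcases List.prefix_concat_iff.1 hτ with rfl | hτ
    · exact hω
    · exact ih (mem_pruned_of_append hω) hτ

theorem append_mem_pruned_iff {ω : List ℕ} (hω : ω ∈ W.pruned) (a : ℕ) :
    ω ++ [a] ∈ W.pruned ↔ ω ++ [a] ∈ W.T ∧ a ≤ W.cutoff ω (W.mass ω) := by
  change 0 < W.mass (ω ++ [a]) ↔ _
  rw [mass_append_singleton, massStep]
  by_cases ha : a ≤ W.cutoff ω (W.mass ω)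
  · by_cases hT : ω ++ [a] ∈ W.T
    · have hcw : 0 < W.childWeight ω a := by rw [childWeight, if_pos hT]; exact W.w_pos _ hT
      have hU := hcw.trans_le (childWeight_le_childSum ω ha)
      simp only [ha, hT, if_true, and_self, iff_true]
      exact div_pos (mul_pos hω hcw) hU
    · simp [childWeight, hT]
  · simp [ha]

theorem pruned_subset : W.pruned ⊆ W.T := by
  intro ω hω
  induction ω using List.reverseRecOn with
  | nil => exact W.nil_mem
  | append_singleton ω a _ => exact ((append_mem_pruned_iff (mem_pruned_of_append hω) a).1 hω).1

theorem massStep_bounds {ω : List ℕ} (hω : ω ∈ W.T) {t : ℝ} (ht : (1 - W.θ) * W.w ω ≤ t)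
    (ht' : t < W.w ω) {a : ℕ} (ha : ω ++ [a] ∈ W.T) (haN : a ≤ W.cutoff ω t) :
    (1 - W.θ) * W.w (ω ++ [a]) ≤ W.massStep ω t a ∧ W.massStep ω t a < W.w (ω ++ [a]) := by
  have hθ := W.θ_pos
  have hθ' := W.θ_lt_one
  have hw := W.w_pos ω hω
  have hwa := W.w_pos _ ha
  have ht0 : 0 ≤ t := le_trans (mul_nonneg (by linarith) hw.le) ht
  obtain ⟨hU, hU'⟩ := cutoff_spec hω ht0 ht'
  have hUpos : 0 < W.childSum ω (W.cutoff ω t) := ht0.trans_lt hU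
  rw [massStep, if_pos haN, childWeight, if_pos ha]
  constructor
  · -- `(1 - θ) U ≤ (1 - θ) (t + θ w) ≤ t`, the last step being the hypothesis on `t`
    have : (1 - W.θ) * W.childSum ω (W.cutoff ω t) ≤ t := by nlinarith
    rw [le_div_iff₀ hUpos]
    nlinarith
  · rw [div_lt_iff₀ hUpos]
    nlinarith

theorem mass_bounds {ω : List ℕ} (hω : ω ∈ W.pruned) :
    (1 - W.θ) * W.w ω ≤ W.mass ω ∧ W.mass ω < W.w ω := by
  induction ω using List.reverseRecOn with
  | nil =>
    have := W.w_pos [] W.nil_mem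
    exact ⟨le_rfl, by rw [mass_nil]; nlinarith [W.θ_pos]⟩
  | append_singleton ω a ih =>
    have hω' := mem_pruned_of_append hω
    obtain ⟨ha, haN⟩ := (append_mem_pruned_iff hω' a).1 hω
    rw [mass_append_singleton]
    exact massStep_bounds (pruned_subset hω') (ih hω').1 (ih hω').2 ha haN

open Classical in
noncomputable def children (W : WeightedTree) (ω : List ℕ) : Finset ℕ :=
  (Finset.range (W.cutoff ω (W.mass ω) + 1)).filter fun a => ω ++ [a] ∈ W.pruned

theorem mem_children {ω : List ℕ} (hω : ω ∈ W.pruned) {a : ℕ} :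
    a ∈ W.children ω ↔ ω ++ [a] ∈ W.pruned := by
  classical
  rw [children, Finset.mem_filter, Finset.mem_range, Nat.lt_succ_iff]
  exact ⟨And.right, fun h => ⟨((append_mem_pruned_iff hω a).1 h).2, h⟩⟩

theorem sum_mass_children {ω : List ℕ} (hω : ω ∈ W.pruned) :
    ∑ a ∈ W.children ω, W.mass (ω ++ [a]) = W.mass ω := by
  have hU : W.mass ω < W.childSum ω (W.cutoff ω (W.mass ω)) :=
    (cutoff_spec (pruned_subset hω) (mass_nonneg ω) (mass_bounds hω).2).1
  classical
  rw [children, Finset.sum_filter_of_ne fun a _ h =>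
    show ω ++ [a] ∈ W.pruned from (mass_nonneg _).lt_of_ne' h]
  simp only [mass_append_singleton, massStep]
  rw [Finset.sum_congr rfl fun a ha => if_pos (Nat.lt_succ_iff.1 (Finset.mem_range.1 ha)),
    ← Finset.sum_div, ← Finset.mul_sum, ← childSum, mul_div_assoc,
    div_self ((mass_nonneg ω).trans_lt hU).ne', mul_one]

theorem exists_append_mem_pruned {ω : List ℕ} (hω : ω ∈ W.pruned) :
    ∃ a, ω ++ [a] ∈ W.pruned := by
  obtain ⟨a, ha⟩ : (W.children ω).Nonempty := Finset.nonempty_iff_ne_empty.2 fun h => by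
    have := sum_mass_children hω
    rw [h, Finset.sum_empty] at this
    exact hω.ne this
  exact ⟨a, (mem_children hω).1 ha⟩

theorem exists_branch {ω : List ℕ} (hω : ω ∈ W.pruned) :
    ∃ β : ℕ → ℕ, (∀ n, pre β n ∈ W.pruned) ∧ pre β ω.length = ω :=
  exists_branch_of_forall_exists_append (fun _ hρ _ hτ => mem_pruned_of_prefix hρ hτ)
    (fun _ hρ => exists_append_mem_pruned hρ) hω

theorem w_le_pow {ω : List ℕ} (hω : ω ∈ W.pruned) : W.w ω ≤ W.θ ^ ω.length * W.w [] := by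
  induction ω using List.reverseRecOn with
  | nil => simp
  | append_singleton ω a ih =>
    have hω' := mem_pruned_of_append hω
    calc W.w (ω ++ [a]) ≤ W.θ * W.w ω :=
          W.w_append_le ω (pruned_subset hω') a (pruned_subset hω)
      _ ≤ W.θ * (W.θ ^ ω.length * W.w []) := by gcongr; exacts [W.θ_pos.le, ih hω']
      _ = W.θ ^ (ω ++ [a]).length * W.w [] := by simp [pow_succ]; ring

theorem exists_mem_pruned_mass_lt {ε : ℝ} (hε : 0 < ε) : ∃ τ ∈ W.pruned, W.mass τ < ε := by
  obtain ⟨β, hβ, -⟩ := exists_branch (W := W) nil_mem_pruned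
  have hw := W.w_pos [] W.nil_mem
  obtain ⟨n, hn⟩ := exists_pow_lt_of_lt_one (div_pos hε hw) W.θ_lt_one
  refine ⟨pre β n, hβ n, ?_⟩
  calc W.mass (pre β n) < W.w (pre β n) := (mass_bounds (hβ n)).2
    _ ≤ W.θ ^ n * W.w [] := by simpa [length_pre] using w_le_pow (hβ n)
    _ < ε := (lt_div_iff₀ hw).1 hn

noncomputable def level (W : WeightedTree) : ℕ → Finset (List ℕ)
  | 0 => {[]}
  | n + 1 => ((W.level n).sigma W.children).image fun p => p.1 ++ [p.2]

theorem mem_level {n : ℕ} {τ : List ℕ} : τ ∈ W.level n ↔ τ ∈ W.pruned ∧ τ.length = n := by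
  induction n generalizing τ with
  | zero =>
    simp only [level, Finset.mem_singleton, List.length_eq_zero_iff]
    exact ⟨fun h => ⟨h ▸ nil_mem_pruned, h⟩, And.right⟩
  | succ n ih =>
    simp only [level, Finset.mem_image, Finset.mem_sigma, Sigma.exists, ih]
    constructor
    · rintro ⟨ρ, a, ⟨⟨hρ, rfl⟩, ha⟩, rfl⟩
      exact ⟨(mem_children hρ).1 ha, by simp⟩
    · rintro ⟨hτ, hlen⟩
      obtain ⟨ρ, a, rfl⟩ : ∃ ρ a, τ = ρ ++ [a] := by
        rcases List.eq_nil_or_concat τ with rfl | ⟨ρ, a, rfl⟩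
        · simp at hlen
        · exact ⟨ρ, a, List.concat_eq_append ..⟩
      have hρ := mem_pruned_of_append hτ
      exact ⟨ρ, a, ⟨⟨hρ, by simpa using hlen⟩, (mem_children hρ).2 hτ⟩, rfl⟩

theorem sum_level_succ {M : Type*} [AddCommMonoid M] (f : List ℕ → M) (n : ℕ) :
    ∑ τ ∈ W.level (n + 1), f τ = ∑ ρ ∈ W.level n, ∑ a ∈ W.children ρ, f (ρ ++ [a]) := by
  rw [level, Finset.sum_image, Finset.sum_sigma]
  rintro ⟨ρ, a⟩ - ⟨ρ', a'⟩ - h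
  obtain ⟨rfl, h'⟩ := List.append_inj' h rfl
  simp only [List.cons.injEq, and_true] at h'
  rw [h']

theorem sum_mass_level_of_prefix {g : List ℕ} (hg : g ∈ W.pruned) {n : ℕ} (hn : g.length ≤ n) :
    ∑ τ ∈ (W.level n).filter (g <+: ·), W.mass τ = W.mass g := by
  rw [Finset.sum_filter]
  induction n, hn using Nat.le_induction with
  | base =>
    rw [Finset.sum_eq_single_of_mem g (mem_level.2 ⟨hg, rfl⟩), if_pos List.prefix_rfl]
    intro τ hτ hne
    exact if_neg fun h => hne (h.eq_of_length (mem_level.1 hτ).2.symm).symm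
  | succ n hn ih =>
    rw [sum_level_succ, ← ih]
    refine Finset.sum_congr rfl fun ρ hρ => ?_
    have hpre : ∀ a, g <+: ρ ++ [a] ↔ g <+: ρ := fun a => by
      rw [List.prefix_concat_iff, or_iff_right]
      intro h
      have := congrArg List.length h
      simp [(mem_level.1 hρ).2] at this
      omega
    simp_rw [hpre]
    split_ifs
    · exact sum_mass_children (mem_level.1 hρ).1
    · simp

end WeightedTree

/-! ### Partition structures and the limit set of the pruned tree -/

structure PartitionStructure (Z : Type*) [MetricSpace Z] where
  T : Set (List ℕ)
  P : List ℕ → Set Z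
  κ : ℝ
  lam : ℝ
  κ_pos : 0 < κ
  lam_pos : 0 < lam
  lam_lt_one : lam < 1
  nil_mem : [] ∈ T
  isClosed : ∀ ω ∈ T, IsClosed (P ω)
  diam_pos : ∀ ω ∈ T, 0 < diam (P ω)
  subset_of_prefix : ∀ ω ∈ T, ∀ τ ∈ T, ω <+: τ → P τ ⊆ P ω
  disjoint : ∀ ω ∈ T, ∀ τ ∈ T, ¬ ω <+: τ → ¬ τ <+: ω → Disjoint (P ω) (P τ)
  le_dist : ∀ ω ∈ T, ∀ a, ω ++ [a] ∈ T →
    ∀ p ∈ P (ω ++ [a]), ∀ q ∉ P ω, κ * diam (P ω) ≤ dist p q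
  le_diam_append : ∀ ω ∈ T, ∀ a, ω ++ [a] ∈ T → κ * diam (P ω) ≤ diam (P (ω ++ [a]))
  diam_append_le : ∀ ω ∈ T, ∀ a, ω ++ [a] ∈ T → diam (P (ω ++ [a])) ≤ lam * diam (P ω)

namespace PartitionStructure

open WeightedTree

variable {Z : Type*} [MetricSpace Z] (S : PartitionStructure Z)

def IsThick (s : ℝ) : Prop :=
  ∀ ω ∈ S.T, ENNReal.ofReal (diam (S.P ω) ^ s) ≤
    ∑' a : {a : ℕ // ω ++ [a] ∈ S.T}, ENNReal.ofReal (diam (S.P (ω ++ [a.1])) ^ s)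

noncomputable def weightedTree {s : ℝ} (hs : 0 < s) (hS : S.IsThick s) : WeightedTree where
  T := S.T
  w ω := diam (S.P ω) ^ s
  θ := S.lam ^ s
  nil_mem := S.nil_mem
  w_pos ω hω := Real.rpow_pos_of_pos (S.diam_pos ω hω) s
  θ_pos := Real.rpow_pos_of_pos S.lam_pos s
  θ_lt_one := Real.rpow_lt_one S.lam_pos.le S.lam_lt_one hs
  w_append_le ω hω a ha := by
    rw [← Real.mul_rpow S.lam_pos.le diam_nonneg]
    exact Real.rpow_le_rpow diam_nonneg (S.diam_append_le ω hω a ha) hs.le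
  ofReal_w_le_tsum := hS

variable {S}

theorem isBounded {ω : List ℕ} (hω : ω ∈ S.T) : Bornology.IsBounded (S.P ω) := by
  by_contra h
  exact (S.diam_pos ω hω).ne' (diam_eq_zero_of_unbounded h)

theorem nonempty {ω : List ℕ} (hω : ω ∈ S.T) : (S.P ω).Nonempty :=
  Set.nonempty_iff_ne_empty.2 fun h => (S.diam_pos ω hω).ne' (by rw [h, diam_empty])

theorem eq_of_length_eq {ω τ : List ℕ} (hω : ω ∈ S.T) (hτ : τ ∈ S.T)
    (hlen : ω.length = τ.length) {x : Z} (hxω : x ∈ S.P ω) (hxτ : x ∈ S.P τ) : ω = τ := by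
  by_contra hne
  exact Set.disjoint_left.1 (S.disjoint ω hω τ hτ (fun h => hne (h.eq_of_length hlen))
    (fun h => hne (h.eq_of_length hlen.symm).symm)) hxω hxτ

variable {W : WeightedTree}

theorem mem_of_mem_pruned (hW : W.T = S.T) {ω : List ℕ} (hω : ω ∈ W.pruned) : ω ∈ S.T :=
  hW ▸ pruned_subset hω

theorem diam_le_of_mem_pruned (hW : W.T = S.T) {ω : List ℕ} (hω : ω ∈ W.pruned) :
    diam (S.P ω) ≤ S.lam ^ ω.length * diam (S.P []) := by
  induction ω using List.reverseRecOn with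
  | nil => simp
  | append_singleton ω a ih =>
    have hω' := mem_pruned_of_append hω
    calc diam (S.P (ω ++ [a])) ≤ S.lam * diam (S.P ω) :=
          S.diam_append_le ω (S.mem_of_mem_pruned hW hω') a (S.mem_of_mem_pruned hW hω)
      _ ≤ S.lam * (S.lam ^ ω.length * diam (S.P [])) := by
          gcongr; exacts [S.lam_pos.le, ih hω']
      _ = S.lam ^ (ω ++ [a]).length * diam (S.P []) := by simp [pow_succ]; ring

theorem tendsto_diam_pre (hW : W.T = S.T) {β : ℕ → ℕ} (hβ : ∀ n, pre β n ∈ W.pruned) :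
    Filter.Tendsto (fun n => diam (S.P (pre β n))) Filter.atTop (nhds 0) := by
  refine squeeze_zero (fun _ => diam_nonneg)
    (fun n => by simpa [length_pre] using S.diam_le_of_mem_pruned hW (hβ n)) ?_
  simpa using (tendsto_pow_atTop_nhds_zero_of_lt_one S.lam_pos.le S.lam_lt_one).mul_const
    (diam (S.P []))

theorem prefix_of_mem_of_mem (hW : W.T = S.T) {ω τ : List ℕ} (hω : ω ∈ W.pruned)
    (hτ : τ ∈ W.pruned) (hlen : ω.length ≤ τ.length) {x : Z} (hxω : x ∈ S.P ω)
    (hxτ : x ∈ S.P τ) : ω <+: τ := by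
  have hρ : τ.take ω.length ∈ W.pruned := mem_pruned_of_prefix hτ (List.take_prefix _ _)
  have hxρ : x ∈ S.P (τ.take ω.length) := S.subset_of_prefix _ (S.mem_of_mem_pruned hW hρ) _
    (S.mem_of_mem_pruned hW hτ) (List.take_prefix _ _) hxτ
  rw [S.eq_of_length_eq (S.mem_of_mem_pruned hW hω) (S.mem_of_mem_pruned hW hρ)
    (by simp [hlen]) hxω hxρ]
  exact List.take_prefix _ _

theorem limitSet_subset_nil : limitSet W.pruned S.P ⊆ S.P [] :=
  fun _ ⟨_, _, hz⟩ => hz 0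

theorem limitSet_subset_iUnion_level (n : ℕ) :
    limitSet W.pruned S.P ⊆ ⋃ τ ∈ W.level n, S.P τ := by
  rintro z ⟨β, hβ, hz⟩
  exact Set.mem_biUnion (mem_level.2 ⟨hβ n, length_pre β n⟩) (hz n)

theorem nonempty_inter_limitSet [CompleteSpace Z] (hW : W.T = S.T) {ω : List ℕ}
    (hω : ω ∈ W.pruned) : (S.P ω ∩ limitSet W.pruned S.P).Nonempty := by
  obtain ⟨β, hβ, hβω⟩ := exists_branch hω
  have hT n := S.mem_of_mem_pruned hW (hβ n)
  obtain ⟨z, hz⟩ := nonempty_iInter_of_nonempty_biInter (s := fun n => S.P (pre β n))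
    (fun n => S.isClosed _ (hT n)) (fun n => isBounded (hT n))
    (fun N => (nonempty (hT N)).mono (Set.subset_iInter₂ fun n hn =>
      S.subset_of_prefix _ (hT n) _ (hT N) (pre_prefix_pre β hn)))
    (S.tendsto_diam_pre hW hβ)
  rw [Set.mem_iInter] at hz
  exact ⟨z, hβω ▸ hz _, β, hβ, hz⟩

theorem limitSet_eq_iInter (hW : W.T = S.T) :
    limitSet W.pruned S.P = ⋂ n, ⋃ τ ∈ W.level n, S.P τ := by
  refine (Set.subset_iInter S.limitSet_subset_iUnion_level).antisymm fun z hz => ?_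
  have h n : ∃ τ ∈ W.level n, z ∈ S.P τ := by simpa using Set.mem_iInter.1 hz n
  choose τ hτ hzτ using h
  have hτ' n := mem_level.1 (hτ n)
  obtain ⟨β, hβ⟩ := exists_pre_eq_of_prefix_chain (fun n => (hτ' n).2) fun n =>
    S.prefix_of_mem_of_mem hW (hτ' n).1 (hτ' (n + 1)).1 (by simp [(hτ' _).2]) (hzτ n) (hzτ _)
  exact ⟨β, fun n => hβ n ▸ (hτ' n).1, fun n => hβ n ▸ hzτ n⟩

theorem isClosed_limitSet (hW : W.T = S.T) : IsClosed (limitSet W.pruned S.P) := by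
  rw [S.limitSet_eq_iInter hW]
  exact isClosed_iInter fun n => isClosed_biUnion_finset fun τ hτ =>
    S.isClosed τ (S.mem_of_mem_pruned hW (mem_level.1 hτ).1)

theorem totallyBounded_limitSet (hW : W.T = S.T) : TotallyBounded (limitSet W.pruned S.P) := by
  rw [Metric.totallyBounded_iff]
  intro ε hε
  obtain ⟨n, hn⟩ := exists_pow_lt_of_lt_one (div_pos hε (S.diam_pos [] S.nil_mem)) S.lam_lt_one
  have hτT τ (hτ : τ ∈ W.level n) := S.mem_of_mem_pruned hW (mem_level.1 hτ).1
  obtain ⟨z₀, -⟩ := nonempty S.nil_mem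
  have : Nonempty Z := ⟨z₀⟩
  choose! x hx using fun τ hτ => nonempty (hτT τ hτ)
  refine ⟨x '' W.level n, (W.level n).finite_toSet.image x, fun z hz => ?_⟩
  obtain ⟨τ, hτ, hzτ⟩ := Set.mem_iUnion₂.1 (S.limitSet_subset_iUnion_level n hz)
  refine Set.mem_biUnion (Set.mem_image_of_mem x hτ) (mem_ball.2 ?_)
  calc dist z (x τ) ≤ diam (S.P τ) := dist_le_diam_of_mem (isBounded (hτT τ hτ)) hzτ (hx τ hτ)
    _ ≤ S.lam ^ n * diam (S.P []) :=
        (mem_level.1 hτ).2 ▸ S.diam_le_of_mem_pruned hW (mem_level.1 hτ).1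
    _ < ε := (lt_div_iff₀ (S.diam_pos [] S.nil_mem)).1 hn

theorem isCompact_limitSet [CompleteSpace Z] (hW : W.T = S.T) :
    IsCompact (limitSet W.pruned S.P) :=
  (S.totallyBounded_limitSet hW).isCompact_of_isClosed (S.isClosed_limitSet hW)

/-- The complement of a cell in the limit set is covered by the finitely many other cells of the
same depth. -/
theorem exists_isOpen_inter_limitSet_eq (hW : W.T = S.T) {τ : List ℕ} (hτ : τ ∈ W.pruned) :
    ∃ V, IsOpen V ∧ V ∩ limitSet W.pruned S.P = S.P τ ∩ limitSet W.pruned S.P := by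
  have hT ρ (hρ : ρ ∈ W.level τ.length) := S.mem_of_mem_pruned hW (mem_level.1 hρ).1
  refine ⟨(⋃ ρ ∈ (W.level τ.length).erase τ, S.P ρ)ᶜ, (isClosed_biUnion_finset fun ρ hρ =>
    S.isClosed ρ (hT ρ (Finset.mem_of_mem_erase hρ))).isOpen_compl, Set.ext fun z => ?_⟩
  simp only [Set.mem_inter_iff, Set.mem_compl_iff, Set.mem_iUnion, Finset.mem_erase, not_exists,
    not_and, exists_prop]
  constructor
  · rintro ⟨hV, hz⟩
    obtain ⟨ρ, hρ, hzρ⟩ := Set.mem_iUnion₂.1 (S.limitSet_subset_iUnion_level τ.length hz)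
    by_cases h : ρ = τ
    · exact ⟨h ▸ hzρ, hz⟩
    · exact absurd hzρ (hV ρ ⟨h, hρ⟩)
  · rintro ⟨hzτ, hz⟩
    refine ⟨fun ρ ⟨hne, hρ⟩ hzρ => hne ?_, hz⟩
    exact S.eq_of_length_eq (hT ρ hρ) (S.mem_of_mem_pruned hW hτ) (mem_level.1 hρ).2 hzρ hzτ

theorem κ_lt_one {ω : List ℕ} (hω : ω ∈ S.T) {a : ℕ} (ha : ω ++ [a] ∈ S.T) : S.κ < 1 :=
  ((mul_le_mul_iff_left₀ (S.diam_pos ω hω)).1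
    ((S.le_diam_append ω hω a ha).trans (S.diam_append_le ω hω a ha))).trans_lt S.lam_lt_one

theorem exists_closedBall_inter_limitSet_subset (hW : W.T = S.T) {z : Z}
    (hz : z ∈ limitSet W.pruned S.P) {r : ℝ} (hr : 0 < r) :
    ∃ ω ∈ W.pruned, closedBall z r ∩ limitSet W.pruned S.P ⊆ S.P ω ∧
      S.κ ^ 2 * diam (S.P ω) ≤ r := by
  obtain ⟨β, hβ, hzβ⟩ := hz
  have hT n := S.mem_of_mem_pruned hW (hβ n)
  obtain ⟨n, hn, hfirst⟩ := exists_first_le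
    (((S.tendsto_diam_pre hW hβ).const_mul S.κ).eventually (ge_mem_nhds (by simpa using hr))).exists
  obtain ⟨a, ha⟩ := exists_append_mem_pruned (W := W) nil_mem_pruned
  have hκ1 := κ_lt_one S.nil_mem (S.mem_of_mem_pruned hW ha)
  have hκ := S.κ_pos
  rcases n with _ | m
  · refine ⟨[], nil_mem_pruned, Set.inter_subset_right.trans limitSet_subset_nil, ?_⟩
    have : 0 ≤ diam (S.P []) := diam_nonneg
    change S.κ * diam (S.P []) ≤ r at hn
    nlinarith
  · have hm1 : pre β m ++ [β m] ∈ S.T := pre_succ β m ▸ hT (m + 1)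
    refine ⟨pre β m, hβ m, fun y ⟨hy, _⟩ => ?_, ?_⟩
    · by_contra hyP
      have := S.le_dist _ (hT m) (β m) hm1 z (pre_succ β m ▸ hzβ (m + 1)) y hyP
      linarith [hfirst m rfl, dist_comm z y ▸ mem_closedBall.1 hy]
    · have := S.le_diam_append _ (hT m) (β m) hm1
      rw [← pre_succ] at this
      calc S.κ ^ 2 * diam (S.P (pre β m)) = S.κ * (S.κ * diam (S.P (pre β m))) := by ring
        _ ≤ S.κ * diam (S.P (pre β (m + 1))) := by gcongr
        _ ≤ r := hn

theorem exists_subset_closedBall (hW : W.T = S.T) {z : Z} (hz : z ∈ limitSet W.pruned S.P)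
    {r : ℝ} (hr : 0 < r) :
    ∃ ω ∈ W.pruned, S.P ω ⊆ closedBall z r ∧ min (diam (S.P [])) (S.κ * r) ≤ diam (S.P ω) := by
  obtain ⟨β, hβ, hzβ⟩ := hz
  have hT n := S.mem_of_mem_pruned hW (hβ n)
  obtain ⟨n, hn, hfirst⟩ := exists_first_le
    (((S.tendsto_diam_pre hW hβ)).eventually (ge_mem_nhds hr)).exists
  refine ⟨pre β n, hβ n, fun y hy => mem_closedBall.2
    ((dist_le_diam_of_mem (isBounded (hT n)) hy (hzβ n)).trans hn), ?_⟩
  rcases n with _ | m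
  · exact min_le_left _ _
  · have hm1 : pre β m ++ [β m] ∈ S.T := pre_succ β m ▸ hT (m + 1)
    have := S.le_diam_append _ (hT m) (β m) hm1
    rw [← pre_succ] at this
    have := mul_le_mul_of_nonneg_left (hfirst m rfl).le S.κ_pos.le
    exact (min_le_right _ _).trans (by linarith)

/-! ### The mass measure -/

variable (S W) in
noncomputable def cellCost (E : Set Z) : ℝ≥0∞ :=
  ⨅ τ ∈ W.pruned, ⨅ (_ : E ∩ limitSet W.pruned S.P ⊆ S.P τ), ENNReal.ofReal (W.mass τ)

theorem cellCost_le {E : Set Z} {τ : List ℕ} (hτ : τ ∈ W.pruned)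
    (hE : E ∩ limitSet W.pruned S.P ⊆ S.P τ) : S.cellCost W E ≤ ENNReal.ofReal (W.mass τ) :=
  iInf₂_le_of_le τ hτ (iInf_le _ hE)

theorem cellCost_empty : S.cellCost W ∅ = 0 := by
  refine le_antisymm (ENNReal.le_of_forall_pos_le_add fun ε hε _ => ?_) zero_le
  obtain ⟨τ, hτ, hm⟩ := exists_mem_pruned_mass_lt (W := W) hε
  calc S.cellCost W ∅ ≤ ENNReal.ofReal (W.mass τ) := cellCost_le hτ (by simp)
    _ ≤ 0 + ε := by rw [zero_add, ← ENNReal.ofReal_coe_nnreal]; exact ENNReal.ofReal_le_ofReal hm.le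

theorem exists_lt_cellCost_add (E : Set Z) {δ : ℝ≥0∞} (hδ : δ ≠ 0) :
    ∃ τ ∈ W.pruned, E ∩ limitSet W.pruned S.P ⊆ S.P τ ∧
      ENNReal.ofReal (W.mass τ) < S.cellCost W E + δ := by
  have hfin : S.cellCost W E ≠ ⊤ := ne_top_of_le_ne_top ENNReal.ofReal_ne_top
    (cellCost_le nil_mem_pruned (Set.inter_subset_right.trans limitSet_subset_nil))
  have h := ENNReal.lt_add_right hfin hδ
  conv_lhs at h => rw [cellCost]
  simp only [iInf_lt_iff] at h
  obtain ⟨τ, hτ, hE, h⟩ := h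
  exact ⟨τ, hτ, hE, h⟩

theorem mkMetric'_cellCost_le (hW : W.T = S.T) {ω : List ℕ} (hω : ω ∈ W.pruned) :
    OuterMeasure.mkMetric' (S.cellCost W) (S.P ω ∩ limitSet W.pruned S.P) ≤
      ENNReal.ofReal (W.mass ω) := by
  classical
  simp only [OuterMeasure.mkMetric', OuterMeasure.iSup_apply]
  refine iSup₂_le fun r hr => ?_
  have hsmall : Filter.Tendsto (fun n => ENNReal.ofReal (S.lam ^ n * diam (S.P [])))
      Filter.atTop (nhds 0) := by
    simpa using ENNReal.tendsto_ofReal ((tendsto_pow_atTop_nhds_zero_of_lt_one S.lam_pos.le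
      S.lam_lt_one).mul_const (diam (S.P [])))
  obtain ⟨n, hnr, hnω⟩ :=
    ((hsmall.eventually (gt_mem_nhds hr)).and (Filter.eventually_ge_atTop ω.length)).exists
  have hcover : S.P ω ∩ limitSet W.pruned S.P ⊆
      ⋃ τ ∈ (W.level n).filter (ω <+: ·), S.P τ ∩ limitSet W.pruned S.P := by
    rintro x ⟨hxω, β, hβ, hxβ⟩
    refine Set.mem_biUnion (Finset.mem_filter.2 ⟨mem_level.2 ⟨hβ n, length_pre β n⟩, ?_⟩)
      ⟨hxβ n, β, hβ, hxβ⟩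
    exact S.prefix_of_mem_of_mem hW hω (hβ n) (by rwa [length_pre]) hxω (hxβ n)
  have hdiam {τ} (hτ : τ ∈ W.level n) : ediam (S.P τ ∩ limitSet W.pruned S.P) ≤ r := by
    have hτT := S.mem_of_mem_pruned hW (mem_level.1 hτ).1
    calc ediam (S.P τ ∩ limitSet W.pruned S.P) ≤ ediam (S.P τ) := ediam_mono Set.inter_subset_left
      _ = ENNReal.ofReal (diam (S.P τ)) := (ENNReal.ofReal_toReal (isBounded hτT).ediam_ne_top).symm
      _ ≤ ENNReal.ofReal (S.lam ^ n * diam (S.P [])) := ENNReal.ofReal_le_ofReal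
          ((mem_level.1 hτ).2 ▸ S.diam_le_of_mem_pruned hW (mem_level.1 hτ).1)
      _ ≤ r := hnr.le
  calc OuterMeasure.mkMetric'.pre (S.cellCost W) r (S.P ω ∩ limitSet W.pruned S.P)
      ≤ ∑ τ ∈ (W.level n).filter (ω <+: ·),
          OuterMeasure.mkMetric'.pre (S.cellCost W) r (S.P τ ∩ limitSet W.pruned S.P) :=
        (measure_mono hcover).trans (measure_biUnion_finset_le _ _)
    _ ≤ ∑ τ ∈ (W.level n).filter (ω <+: ·), ENNReal.ofReal (W.mass τ) := by
        refine Finset.sum_le_sum fun τ hτ => ?_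
        have hτ := (Finset.mem_filter.1 hτ).1
        exact (OuterMeasure.mkMetric'.pre_le (hdiam hτ)).trans
          (cellCost_le (mem_level.1 hτ).1 (Set.inter_subset_left.trans Set.inter_subset_left))
    _ = ENNReal.ofReal (W.mass ω) := by
        rw [← ENNReal.ofReal_sum_of_nonneg fun _ _ => mass_nonneg _,
          sum_mass_level_of_prefix hω hnω]

theorem mass_le_sum_of_subset_biUnion [CompleteSpace Z] (hW : W.T = S.T) {ω : List ℕ}
    (hω : ω ∈ W.pruned) {F : Finset (List ℕ)} (hF : ∀ g ∈ F, g ∈ W.pruned)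
    (hcover : S.P ω ∩ limitSet W.pruned S.P ⊆ ⋃ g ∈ F, S.P g) :
    W.mass ω ≤ ∑ g ∈ F, W.mass g := by
  classical
  set K := max ω.length (F.sup List.length)
  have hK {g} (hg : g ∈ F) : g.length ≤ K := (Finset.le_sup hg).trans (le_max_right _ _)
  have hsub : ∀ τ ∈ (W.level K).filter (ω <+: ·), ∃ g ∈ F, g <+: τ := by
    intro τ hτ
    obtain ⟨⟨hτp, hτK⟩, hωτ⟩ := And.imp_left mem_level.1 (Finset.mem_filter.1 hτ)
    obtain ⟨x, hxτ, hxX⟩ := S.nonempty_inter_limitSet hW hτp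
    have hxω : x ∈ S.P ω := S.subset_of_prefix _ (S.mem_of_mem_pruned hW hω) _
      (S.mem_of_mem_pruned hW hτp) hωτ hxτ
    obtain ⟨g, hg, hxg⟩ := Set.mem_iUnion₂.1 (hcover ⟨hxω, hxX⟩)
    exact ⟨g, hg, S.prefix_of_mem_of_mem hW (hF g hg) hτp (hτK ▸ hK hg) hxg hxτ⟩
  calc W.mass ω = ∑ τ ∈ (W.level K).filter (ω <+: ·), W.mass τ :=
        (sum_mass_level_of_prefix hω (le_max_left _ _)).symm
    _ ≤ ∑ τ ∈ (W.level K).filter (ω <+: ·), ∑ _g ∈ F.filter (· <+: τ), W.mass τ := by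
        refine Finset.sum_le_sum fun τ hτ => ?_
        obtain ⟨g, hg, hgτ⟩ := hsub τ hτ
        rw [Finset.sum_const, nsmul_eq_mul]
        exact le_mul_of_one_le_left (mass_nonneg τ)
          (by exact_mod_cast Finset.card_pos.2 ⟨g, Finset.mem_filter.2 ⟨hg, hgτ⟩⟩)
    _ ≤ ∑ τ ∈ W.level K, ∑ _g ∈ F.filter (· <+: τ), W.mass τ :=
        Finset.sum_le_sum_of_subset_of_nonneg (Finset.filter_subset _ _)
          fun _ _ _ => Finset.sum_nonneg fun _ _ => mass_nonneg _
    _ = ∑ g ∈ F, ∑ τ ∈ (W.level K).filter (g <+: ·), W.mass τ :=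
        Finset.sum_comm' fun τ g => by simp only [Finset.mem_filter]; tauto
    _ = ∑ g ∈ F, W.mass g :=
        Finset.sum_congr rfl fun g hg => sum_mass_level_of_prefix (hF g hg) (hK hg)

/-- A countable cover is reduced to a finite cover by cells, using that the cells are relatively
open in the compact limit set. -/
theorem ofReal_mass_le_ofFunction [CompleteSpace Z] (hW : W.T = S.T) {ω : List ℕ}
    (hω : ω ∈ W.pruned) :
    ENNReal.ofReal (W.mass ω) ≤
      OuterMeasure.ofFunction (S.cellCost W) cellCost_empty (S.P ω ∩ limitSet W.pruned S.P) := by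
  classical
  rw [OuterMeasure.ofFunction_apply]
  refine le_iInf₂ fun t ht => ENNReal.le_of_forall_pos_le_add fun ε hε _ => ?_
  obtain ⟨δ, hδ, hδε⟩ := ENNReal.exists_pos_sum_of_countable (ENNReal.coe_ne_zero.2 hε.ne') ℕ
  choose τ hτ hτt hτm using fun n => exists_lt_cellCost_add (S := S) (W := W) (t n)
    (ENNReal.coe_ne_zero.2 (hδ n).ne')
  choose V hVopen hV using fun n => S.exists_isOpen_inter_limitSet_eq hW (hτ n)
  have hK := (S.isCompact_limitSet hW).inter_left (S.isClosed ω (S.mem_of_mem_pruned hW hω))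
  obtain ⟨F, hF⟩ := hK.elim_finite_subcover V hVopen fun x hx => by
    obtain ⟨n, hn⟩ := Set.mem_iUnion.1 (ht hx)
    have : x ∈ V n ∩ limitSet W.pruned S.P := (hV n).symm ▸ ⟨hτt n ⟨hn, hx.2⟩, hx.2⟩
    exact Set.mem_iUnion.2 ⟨n, this.1⟩
  have hcover : S.P ω ∩ limitSet W.pruned S.P ⊆ ⋃ g ∈ F.image τ, S.P g := fun x hx => by
    obtain ⟨n, hn, hxn⟩ := Set.mem_iUnion₂.1 (hF hx)
    have : x ∈ S.P (τ n) ∩ limitSet W.pruned S.P := hV n ▸ ⟨hxn, hx.2⟩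
    exact Set.mem_biUnion (Finset.mem_image_of_mem τ hn) this.1
  have hsum := S.mass_le_sum_of_subset_biUnion hW hω
    (fun g hg => by obtain ⟨n, -, rfl⟩ := Finset.mem_image.1 hg; exact hτ n) hcover
  calc ENNReal.ofReal (W.mass ω) ≤ ENNReal.ofReal (∑ n ∈ F, W.mass (τ n)) :=
        ENNReal.ofReal_le_ofReal
          (hsum.trans (Finset.sum_image_le_of_nonneg fun _ _ => mass_nonneg _))
    _ = ∑ n ∈ F, ENNReal.ofReal (W.mass (τ n)) :=
        ENNReal.ofReal_sum_of_nonneg fun _ _ => mass_nonneg _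
    _ ≤ ∑ n ∈ F, (S.cellCost W (t n) + δ n) := Finset.sum_le_sum fun n _ => (hτm n).le
    _ = ∑ n ∈ F, S.cellCost W (t n) + ∑ n ∈ F, (δ n : ℝ≥0∞) := Finset.sum_add_distrib
    _ ≤ ∑' n, S.cellCost W (t n) + ε :=
        add_le_add (ENNReal.sum_le_tsum F) ((ENNReal.sum_le_tsum F).trans hδε.le)


theorem mkMetric'_cellCost_eq [CompleteSpace Z] (hW : W.T = S.T) {ω : List ℕ}
    (hω : ω ∈ W.pruned) :
    OuterMeasure.mkMetric' (S.cellCost W) (S.P ω ∩ limitSet W.pruned S.P) =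
      ENNReal.ofReal (W.mass ω) := by
  refine le_antisymm (mkMetric'_cellCost_le hW hω) ((ofReal_mass_le_ofFunction hW hω).trans ?_)
  have : OuterMeasure.ofFunction (S.cellCost W) cellCost_empty ≤
      OuterMeasure.mkMetric'.pre (S.cellCost W) 1 :=
    OuterMeasure.mkMetric'.le_pre.2 fun s _ => OuterMeasure.ofFunction_le s
  exact this.trans (le_iSup₂_of_le (f := fun r (_ : 0 < r) => OuterMeasure.mkMetric'.pre
    (S.cellCost W) r) 1 one_pos le_rfl) _

variable [MeasurableSpace Z] [BorelSpace Z]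

variable (S W) in
noncomputable def massMeasure : Measure Z :=
  (Measure.mkMetric' (S.cellCost W)).restrict (limitSet W.pruned S.P)

variable [CompleteSpace Z]

theorem massMeasure_cell (hW : W.T = S.T) {ω : List ℕ} (hω : ω ∈ W.pruned) :
    S.massMeasure W (S.P ω) = ENNReal.ofReal (W.mass ω) := by
  have hmeas := (S.isClosed ω (S.mem_of_mem_pruned hW hω)).measurableSet
  rw [massMeasure, Measure.restrict_apply hmeas, Measure.mkMetric',
    toMeasure_apply _ _ (hmeas.inter (S.isClosed_limitSet hW).measurableSet),
    mkMetric'_cellCost_eq hW hω]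

theorem massMeasure_le_of_inter_subset (hW : W.T = S.T) {ω : List ℕ}
    (hω : ω ∈ W.pruned) {E : Set Z} (hE : E ∩ limitSet W.pruned S.P ⊆ S.P ω) :
    S.massMeasure W E ≤ ENNReal.ofReal (W.mass ω) := by
  have hX := (S.isClosed_limitSet hW).measurableSet
  rw [← massMeasure_cell hW hω, massMeasure, Measure.restrict_apply' hX,
    Measure.restrict_apply' hX]
  exact measure_mono (Set.subset_inter hE Set.inter_subset_right)

theorem isFiniteMeasure_massMeasure (hW : W.T = S.T) :
    IsFiniteMeasure (S.massMeasure W) :=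
  ⟨(massMeasure_le_of_inter_subset hW nil_mem_pruned
    (Set.inter_subset_right.trans limitSet_subset_nil)).trans_lt ENNReal.ofReal_lt_top⟩

theorem mem_limitSet_iff (hW : W.T = S.T) (z : Z) :
    z ∈ limitSet W.pruned S.P ↔ ∀ r : ℝ, 0 < r → 0 < S.massMeasure W (ball z r) := by
  constructor
  · rintro ⟨β, hβ, hzβ⟩ r hr
    obtain ⟨n, hn⟩ := ((S.tendsto_diam_pre hW hβ).eventually (gt_mem_nhds hr)).exists
    have hT := S.mem_of_mem_pruned hW (hβ n)
    calc 0 < ENNReal.ofReal (W.mass (pre β n)) := ENNReal.ofReal_pos.2 (hβ n)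
      _ = S.massMeasure W (S.P (pre β n)) := (massMeasure_cell hW (hβ n)).symm
      _ ≤ S.massMeasure W (ball z r) := measure_mono fun y hy =>
          mem_ball.2 ((dist_le_diam_of_mem (isBounded hT) hy (hzβ n)).trans_lt hn)
  · intro h
    by_contra hz
    obtain ⟨r, hr, hball⟩ := Metric.isOpen_iff.1 (S.isClosed_limitSet hW).isOpen_compl z hz
    refine (h r hr).ne' ?_
    rw [massMeasure, Measure.restrict_apply' (S.isClosed_limitSet hW).measurableSet,
      (Set.subset_compl_iff_disjoint_right.1 hball).inter_eq, measure_empty]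


/-! ### Ahlfors regularity -/

variable {s : ℝ}

theorem massMeasure_closedBall_le (hW : W.T = S.T) (hw : ∀ ω, W.w ω = diam (S.P ω) ^ s)
    (hs : 0 < s) {z : Z} (hz : z ∈ limitSet W.pruned S.P) {r : ℝ} (hr : 0 < r) :
    S.massMeasure W (closedBall z r) ≤ ENNReal.ofReal ((r / S.κ ^ 2) ^ s) := by
  obtain ⟨ω, hω, hsub, hdiam⟩ := exists_closedBall_inter_limitSet_subset hW hz hr
  refine (massMeasure_le_of_inter_subset hW hω hsub).trans (ENNReal.ofReal_le_ofReal ?_)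
  calc W.mass ω ≤ diam (S.P ω) ^ s := hw ω ▸ (mass_bounds hω).2.le
    _ ≤ (r / S.κ ^ 2) ^ s := Real.rpow_le_rpow diam_nonneg
        ((le_div_iff₀ (pow_pos S.κ_pos 2)).2 (by linarith)) hs.le

theorem le_massMeasure_closedBall (hW : W.T = S.T) (hw : ∀ ω, W.w ω = diam (S.P ω) ^ s)
    (hs : 0 ≤ s) {z : Z} (hz : z ∈ limitSet W.pruned S.P) {r : ℝ} (hr : 0 < r) (hr1 : r ≤ 1) :
    ENNReal.ofReal ((1 - W.θ) * min (diam (S.P [])) S.κ ^ s * r ^ s) ≤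
      S.massMeasure W (closedBall z r) := by
  obtain ⟨ω, hω, hsub, hdiam⟩ := exists_subset_closedBall hW hz hr
  have hmin : 0 ≤ min (diam (S.P [])) S.κ := le_min diam_nonneg S.κ_pos.le
  have hr' : min (diam (S.P [])) S.κ * r ≤ diam (S.P ω) := by
    refine le_trans (le_min ?_ ?_) hdiam
    · exact (mul_le_of_le_one_right hmin hr1).trans (min_le_left _ _)
    · exact mul_le_mul_of_nonneg_right (min_le_right _ _) hr.le
  refine le_trans (ENNReal.ofReal_le_ofReal ?_)
    ((massMeasure_cell hW hω).symm.trans_le (measure_mono hsub))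
  calc (1 - W.θ) * min (diam (S.P [])) S.κ ^ s * r ^ s
      = (1 - W.θ) * (min (diam (S.P [])) S.κ * r) ^ s := by
        rw [Real.mul_rpow hmin hr.le]; ring
    _ ≤ (1 - W.θ) * diam (S.P ω) ^ s := by
        gcongr
        · linarith [W.θ_lt_one]
    _ ≤ W.mass ω := hw ω ▸ (mass_bounds hω).1

theorem exists_ahlfors_regular_constant (hW : W.T = S.T) (hw : ∀ ω, W.w ω = diam (S.P ω) ^ s)
    (hs : 0 < s) :
    ∃ C : ℝ, 1 ≤ C ∧ ∀ z ∈ limitSet W.pruned S.P, ∀ r : ℝ, 0 < r → r < 1 →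
      ENNReal.ofReal (C⁻¹ * r ^ s) ≤ S.massMeasure W (closedBall z r) ∧
      S.massMeasure W (closedBall z r) ≤ ENNReal.ofReal (C * r ^ s) := by
  set c := (1 - W.θ) * min (diam (S.P [])) S.κ ^ s
  have hc : 0 < c := mul_pos (sub_pos.2 W.θ_lt_one)
    (Real.rpow_pos_of_pos (lt_min (S.diam_pos [] S.nil_mem) S.κ_pos) s)
  set C := max 1 (max ((S.κ ^ 2) ^ s)⁻¹ c⁻¹)
  have hC : 0 < C := zero_lt_one.trans_le (le_max_left _ _)
  refine ⟨C, le_max_left _ _, fun z hz r hr hr1 => ⟨?_, ?_⟩⟩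
  · refine le_trans (ENNReal.ofReal_le_ofReal ?_)
      (le_massMeasure_closedBall hW hw hs.le hz hr hr1.le)
    have : C⁻¹ ≤ c := (inv_le_comm₀ hC hc).2 ((le_max_right _ _).trans (le_max_right _ _))
    gcongr
  · refine (massMeasure_closedBall_le hW hw hs hz hr).trans (ENNReal.ofReal_le_ofReal ?_)
    rw [Real.div_rpow hr.le (pow_pos S.κ_pos 2).le, div_eq_inv_mul]
    gcongr
    exact (le_max_left _ _).trans (le_max_right _ _)

end PartitionStructure

theorem thick_partition_structure_ahlfors_substructure_general {Z : Type*} [MetricSpace Z]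
    [CompleteSpace Z] [MeasurableSpace Z] [BorelSpace Z]
    (s : ℝ) (hs : 0 < s)
    (T : Set (List ℕ)) (P : List ℕ → Set Z) (κ lam : ℝ)
    (hκ : 0 < κ) (hlam0 : 0 < lam) (hlam1 : lam < 1)
    (hroot : ([] : List ℕ) ∈ T)
    (hclosed : ∀ ω ∈ T, IsClosed (P ω))
    (hdiam : ∀ ω ∈ T, 0 < Metric.diam (P ω))
    (hnest : ∀ ω ∈ T, ∀ τ ∈ T, ω <+: τ → P τ ⊆ P ω)
    (hdisj : ∀ ω ∈ T, ∀ τ ∈ T, ¬ ω <+: τ → ¬ τ <+: ω → Disjoint (P ω) (P τ))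
    (hsep : ∀ ω ∈ T, ∀ a : ℕ, ω ++ [a] ∈ T →
      (∀ p ∈ P (ω ++ [a]), ∀ q ∉ P ω, κ * Metric.diam (P ω) ≤ dist p q) ∧
      κ * Metric.diam (P ω) ≤ Metric.diam (P (ω ++ [a])) ∧
      Metric.diam (P (ω ++ [a])) ≤ lam * Metric.diam (P ω))
    (hthick : ∀ ω ∈ T, ENNReal.ofReal (Metric.diam (P ω) ^ s) ≤
      ∑' a : {a : ℕ // ω ++ [a] ∈ T}, ENNReal.ofReal (Metric.diam (P (ω ++ [a.1])) ^ s)) :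
    ∃ T' : Set (List ℕ), T' ⊆ T ∧ ([] : List ℕ) ∈ T' ∧
      (∀ ω ∈ T', ∀ τ : List ℕ, τ <+: ω → τ ∈ T') ∧
      (∀ ω ∈ T', ∃ N : ℕ, ∀ a : ℕ, ω ++ [a] ∈ T' ↔ (ω ++ [a] ∈ T ∧ a ≤ N)) ∧
      (∀ ω ∈ T', ∃ a : ℕ, ω ++ [a] ∈ T') ∧
      (∃ μ : Measure Z, IsFiniteMeasure μ ∧
        (∀ z : Z, z ∈ limitSet T' P ↔ ∀ r : ℝ, 0 < r → 0 < μ (ball z r)) ∧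
        ∃ C : ℝ, 1 ≤ C ∧ ∀ z ∈ limitSet T' P, ∀ r : ℝ, 0 < r → r < 1 →
          ENNReal.ofReal (C⁻¹ * r ^ s) ≤ μ (closedBall z r) ∧
          μ (closedBall z r) ≤ ENNReal.ofReal (C * r ^ s)) := by
  let S : PartitionStructure Z :=
    { T, P, κ, lam, κ_pos := hκ, lam_pos := hlam0, lam_lt_one := hlam1, nil_mem := hroot,
      isClosed := hclosed, diam_pos := hdiam, subset_of_prefix := hnest, disjoint := hdisj,
      le_dist := fun ω hω a ha => (hsep ω hω a ha).1,
      le_diam_append := fun ω hω a ha => (hsep ω hω a ha).2.1,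
      diam_append_le := fun ω hω a ha => (hsep ω hω a ha).2.2 }
  let W := S.weightedTree hs hthick
  have hW : W.T = S.T := rfl
  exact ⟨W.pruned, WeightedTree.pruned_subset, WeightedTree.nil_mem_pruned,
    fun ω hω τ hτ => WeightedTree.mem_pruned_of_prefix hω hτ,
    fun ω hω => ⟨_, WeightedTree.append_mem_pruned_iff hω⟩,
    fun ω hω => WeightedTree.exists_append_mem_pruned hω, S.massMeasure W,
    S.isFiniteMeasure_massMeasure hW, S.mem_limitSet_iff hW,
    S.exists_ahlfors_regular_constant hW (fun _ => rfl) hs⟩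

/-- Any `s`-thick partition structure `(P_ω)_{ω ∈ T}` on a complete metric space has a
substructure `(P_ω)_{ω ∈ T'}` (with `T' ⊆ T` a subtree, whose set of children at each node
is an initial segment of the children in `T`) whose limit set is Ahlfors `s`-regular. -/
theorem thick_partition_structure_ahlfors_substructure {Z : Type*} [MetricSpace Z]
    [CompleteSpace Z] [MeasurableSpace Z] [BorelSpace Z]
    (s : ℝ) (hs : 0 < s)
    (T : Set (List ℕ)) (P : List ℕ → Set Z) (κ lam : ℝ)
    (hκ : 0 < κ) (hlam0 : 0 < lam) (hlam1 : lam < 1)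
    (hroot : ([] : List ℕ) ∈ T)
    (hpref : ∀ ω ∈ T, ∀ τ : List ℕ, τ <+: ω → τ ∈ T)
    (hclosed : ∀ ω ∈ T, IsClosed (P ω))
    (hdiam : ∀ ω ∈ T, 0 < Metric.diam (P ω))
    (hnest : ∀ ω ∈ T, ∀ τ ∈ T, ω <+: τ → P τ ⊆ P ω)
    (hdisj : ∀ ω ∈ T, ∀ τ ∈ T, ¬ ω <+: τ → ¬ τ <+: ω → Disjoint (P ω) (P τ))
    (hsep : ∀ ω ∈ T, ∀ a : ℕ, ω ++ [a] ∈ T →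
      (∀ p ∈ P (ω ++ [a]), ∀ q ∉ P ω, κ * Metric.diam (P ω) ≤ dist p q) ∧
      κ * Metric.diam (P ω) ≤ Metric.diam (P (ω ++ [a])) ∧
      Metric.diam (P (ω ++ [a])) ≤ lam * Metric.diam (P ω))
    (hthick : ∀ ω ∈ T, ENNReal.ofReal (Metric.diam (P ω) ^ s) ≤
      ∑' a : {a : ℕ // ω ++ [a] ∈ T}, ENNReal.ofReal (Metric.diam (P (ω ++ [a.1])) ^ s)) :
    ∃ T' : Set (List ℕ), T' ⊆ T ∧ ([] : List ℕ) ∈ T' ∧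
      (∀ ω ∈ T', ∀ τ : List ℕ, τ <+: ω → τ ∈ T') ∧
      (∀ ω ∈ T', ∃ N : ℕ, ∀ a : ℕ, ω ++ [a] ∈ T' ↔ (ω ++ [a] ∈ T ∧ a ≤ N)) ∧
      (∀ ω ∈ T', ∃ a : ℕ, ω ++ [a] ∈ T') ∧
      (∃ μ : Measure Z, IsFiniteMeasure μ ∧
        (∀ z : Z, z ∈ limitSet T' P ↔ ∀ r : ℝ, 0 < r → 0 < μ (ball z r)) ∧
        ∃ C : ℝ, 1 ≤ C ∧ ∀ z ∈ limitSet T' P, ∀ r : ℝ, 0 < r → r < 1 →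
          ENNReal.ofReal (C⁻¹ * r ^ s) ≤ μ (closedBall z r) ∧
          μ (closedBall z r) ≤ ENNReal.ofReal (C * r ^ s)) :=
  thick_partition_structure_ahlfors_substructure_general s hs T P κ lam hκ hlam0 hlam1 hroot hclosed
    hdiam hnest hdisj hsep hthick
end

section
/- In the construction of the measure for an s-thick partition structure: let c = 1 - λ^s with 0 < λ < 1 and s > 0. Suppose μ_n(ω) satisfies c·D_ω^s ≤ μ_n(ω) < D_ω^s, and N_ω is the minimal index such that Σ_{a ≤ N_ω} D_{ωa}^s > μ_n(ω) (which exists since Σ_a D_{ωa}^s ≥ D_ω^s > μ_n(ω)). Define μ_{n+1}(ωa) = D_{ωa}^s·μ_n(ω)/Σ_{b ≤ N_ω} D_{ωb}^s for a ≤ N_ω. Then c·D_{ωa}^s ≤ μ_{n+1}(ωa) < D_{ωa}^s for all a ≤ N_ω. -/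
/-! Each child receives the fraction `μₙ(ω) / S` of its own mass `D_{ωa}^s`, where `S` is the
normalising sum, so it suffices that `c ≤ μₙ(ω) / S < 1`. The upper bound is the choice of `N`.
By minimality of `N`, `S` exceeds `μₙ(ω)` by at most the last child's mass
`D_{ωN}^s ≤ (λ D_ω)^s = λ^s D_ω^s`, and `c · λ^s D_ω^s ≤ λ^s μₙ(ω)`, whence `c S ≤ μₙ(ω)`. -/

lemma proportional_share_bounds {c μ S w : ℝ} (hS : 0 < S) (hcS : c * S ≤ μ) (hμS : μ < S)
    (hw : 0 < w) : c * w ≤ w * μ / S ∧ w * μ / S < w := by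
  constructor
  · rw [le_div_iff₀ hS]
    calc c * w * S = w * (c * S) := by ring
      _ ≤ w * μ := mul_le_mul_of_nonneg_left hcS hw.le
  · rw [div_lt_iff₀ hS]
    exact mul_lt_mul_of_pos_left hμS hw

lemma one_sub_mul_le_of_le_add_mul {x M μ S : ℝ} (hx0 : 0 ≤ x) (hx1 : x ≤ 1)
    (hM : (1 - x) * M ≤ μ) (hS : S ≤ μ + x * M) : (1 - x) * S ≤ μ :=
  calc (1 - x) * S ≤ (1 - x) * (μ + x * M) := mul_le_mul_of_nonneg_left hS (sub_nonneg.2 hx1)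
    _ = (1 - x) * μ + x * ((1 - x) * M) := by ring
    _ ≤ (1 - x) * μ + x * μ := by gcongr
    _ = μ := by ring

theorem measure_redistribution_step_general (s lam Dw : ℝ)
    (hs : 0 < s) (hlam0 : 0 < lam) (hlam1 : lam < 1) (hDw : 0 < Dw)
    (F : Set ℕ) [DecidablePred (· ∈ F)] (D : ℕ → ℝ)
    (hD : ∀ a ∈ F, 0 < D a ∧ D a ≤ lam * Dw)
    (μn : ℝ)
    (hlow : (1 - lam ^ s) * Dw ^ s ≤ μn)
    (N : ℕ)
    (hN : μn < ∑ a ∈ Finset.range (N + 1), if a ∈ F then D a ^ s else 0)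
    (hminimal : (∑ a ∈ Finset.range N, if a ∈ F then D a ^ s else 0) ≤ μn) :
    ∀ a ∈ F, a ≤ N →
      (1 - lam ^ s) * D a ^ s ≤
          D a ^ s * μn / (∑ b ∈ Finset.range (N + 1), if b ∈ F then D b ^ s else 0) ∧
      D a ^ s * μn / (∑ b ∈ Finset.range (N + 1), if b ∈ F then D b ^ s else 0) < D a ^ s := by
  intro a haF _
  have hx0 : 0 ≤ lam ^ s := Real.rpow_nonneg hlam0.le s
  have hx1 : lam ^ s ≤ 1 := Real.rpow_le_one hlam0.le hlam1.le hs.le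
  have hlast : (if N ∈ F then D N ^ s else 0) ≤ lam ^ s * Dw ^ s := by
    split_ifs with hNF
    · rw [← Real.mul_rpow hlam0.le hDw.le]
      exact Real.rpow_le_rpow (hD N hNF).1.le (hD N hNF).2 hs.le
    · positivity
  have hS : (∑ b ∈ Finset.range (N + 1), if b ∈ F then D b ^ s else 0) ≤
      μn + lam ^ s * Dw ^ s := by
    rw [Finset.sum_range_succ]
    exact add_le_add hminimal hlast
  have hμ0 : 0 ≤ μn :=
    (mul_nonneg (sub_nonneg.2 hx1) (Real.rpow_nonneg hDw.le s)).trans hlow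
  exact proportional_share_bounds (hμ0.trans_lt hN)
    (one_sub_mul_le_of_le_add_mul hx0 hx1 hlow hS) hN (Real.rpow_pos_of_pos (hD a haF).1 s)

/-- Inductive step in the construction of the measure on an `s`-thick partition structure:
with `c = 1 - λ^s`, if `c·D_ω^s ≤ μₙ(ω) < D_ω^s` and `N` is the minimal index with
`Σ_{a ≤ N} D_{ωa}^s > μₙ(ω)`, then the redistributed mass
`μ_{n+1}(ωa) = D_{ωa}^s · μₙ(ω) / Σ_{b ≤ N} D_{ωb}^s` satisfies
`c·D_{ωa}^s ≤ μ_{n+1}(ωa) < D_{ωa}^s` for every child `a ≤ N`. -/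
theorem measure_redistribution_step (s lam Dw : ℝ)
    (hs : 0 < s) (hlam0 : 0 < lam) (hlam1 : lam < 1) (hDw : 0 < Dw)
    (F : Set ℕ) [DecidablePred (· ∈ F)] (D : ℕ → ℝ)
    (hD : ∀ a ∈ F, 0 < D a ∧ D a ≤ lam * Dw)
    (μn : ℝ)
    (hlow : (1 - lam ^ s) * Dw ^ s ≤ μn) (hhigh : μn < Dw ^ s)
    (N : ℕ)
    (hN : μn < ∑ a ∈ Finset.range (N + 1), if a ∈ F then D a ^ s else 0)
    (hminimal : (∑ a ∈ Finset.range N, if a ∈ F then D a ^ s else 0) ≤ μn) :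
    ∀ a ∈ F, a ≤ N →
      (1 - lam ^ s) * D a ^ s ≤
          D a ^ s * μn / (∑ b ∈ Finset.range (N + 1), if b ∈ F then D b ^ s else 0) ∧
      D a ^ s * μn / (∑ b ∈ Finset.range (N + 1), if b ∈ F then D b ^ s else 0) < D a ^ s :=
  measure_redistribution_step_general s lam Dw hs hlam0 hlam1 hDw F D hD μn hlow N hN hminimal
end

section
/- Let (X,d) be a Gromov hyperbolic metric space with hyperbolicity constant δ₀ (i.e., ⟨x|z⟩_w ≥ min(⟨x|y⟩_w, ⟨y|z⟩_w) - δ₀ for all x,y,z,w). Then there is a constant C = C(δ₀,σ) such that for any σ > 0 and x,y,z ∈ X with d(z,y) ≥ d(z,x): if some η lies in both shadows Shad_z(x,σ) and Shad_z(y,σ), then |d(x,y) - (d(z,y) - d(z,x))| ≤ C. Here the shadow is defined in terms of Gromov products with boundary points. -/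
open Filter

/-- The Gromov product `⟨p|q⟩_b = (1/2)(d(p,b) + d(q,b) - d(p,q))`. -/
noncomputable def gp {X : Type*} [MetricSpace X] (b p q : X) : ℝ :=
  (dist p b + dist q b - dist p q) / 2

/-- A Gromov sequence (with respect to the basepoint `o`): `⟨u_n|u_m⟩_o → ∞`. -/
def IsGromovSeq {X : Type*} [MetricSpace X] (o : X) (u : ℕ → X) : Prop :=
  Tendsto (fun p : ℕ × ℕ => gp o (u p.1) (u p.2)) atTop atTop

/-- Two Gromov sequences are equivalent (represent the same boundary point) when
`⟨u_n|v_n⟩_o → ∞`. -/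
def SeqEquiv {X : Type*} [MetricSpace X] (o : X) (u v : ℕ → X) : Prop :=
  Tendsto (fun n => gp o (u n) (v n)) atTop atTop

/-- The extended Gromov product `⟨p|ξ⟩_b` of a point `p` with the boundary point `ξ`
represented by the Gromov sequence `u`, defined as the infimum over representatives of the
liminf of the Gromov products. -/
noncomputable def gpB {X : Type*} [MetricSpace X] (o b p : X) (u : ℕ → X) : ℝ :=
  sInf {L : ℝ | ∃ v : ℕ → X, IsGromovSeq o v ∧ SeqEquiv o u v ∧
    L = Filter.liminf (fun n => gp b p (v n)) Filter.atTop}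

/-! Pick representatives `v`, `w` of `η` with `⟨z|v n⟩_x ≤ σ + 1` and `⟨z|w m⟩_y ≤ σ + 1` for
infinitely many `n`, `m`. Far out, `⟨v n|w m⟩_z` is as large as we like, so hyperbolicity
applied twice along `x, v n, w m, y` gives `⟨x|y⟩_z ≥ d(z,x) - σ - 1 - 2δ₀`, that is
`⟨z|y⟩_x ≤ σ + 1 + 2δ₀`. Finally `d(x,y) - (d(z,y) - d(z,x)) = 2⟨z|y⟩_x`. -/

def GromovHyperbolic (X : Type*) [MetricSpace X] (δ : ℝ) : Prop :=
  ∀ x y z w : X, min (gp w x y) (gp w y z) - δ ≤ gp w x z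

section GromovProduct

variable {X : Type*} [MetricSpace X]

lemma gp_comm (b p q : X) : gp b p q = gp b q p := by
  unfold gp; rw [dist_comm p q]; ring

lemma gp_nonneg (b p q : X) : 0 ≤ gp b p q := by
  unfold gp; linarith [dist_triangle p b q, dist_comm b q]

lemma gp_le_dist (b p q : X) : gp b p q ≤ dist p b := by
  unfold gp; linarith [dist_triangle q p b, dist_comm q p]

lemma gp_add_gp_eq_dist (z x p : X) : gp z x p + gp x z p = dist z x := by
  unfold gp; rw [dist_comm x z, dist_comm p x, dist_comm p z]; ring

lemma gp_sub_dist_le_gp (o b p q : X) : gp o p q - dist o b ≤ gp b p q := by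
  unfold gp; linarith [dist_triangle p b o, dist_triangle q b o, dist_comm b o]

lemma two_mul_gp_eq (x y z : X) : 2 * gp x z y = dist x y - (dist z y - dist z x) := by
  unfold gp; rw [dist_comm y x]; ring

end GromovProduct

namespace GromovHyperbolic

variable {X : Type*} [MetricSpace X] {δ : ℝ}

lemma nonneg (hX : GromovHyperbolic X δ) (x : X) : 0 ≤ δ := by
  have := hX x x x x
  simp only [gp, dist_self, min_self] at this
  linarith

lemma tendsto_gp_trans (hX : GromovHyperbolic X δ) {ι : Type*} {l : Filter ι} {o : X}
    {a b c : ι → X} (hab : Tendsto (fun i => gp o (a i) (b i)) l atTop)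
    (hbc : Tendsto (fun i => gp o (b i) (c i)) l atTop) :
    Tendsto (fun i => gp o (a i) (c i)) l atTop :=
  tendsto_atTop_mono (fun i => hX (a i) (b i) (c i) o)
    (tendsto_atTop_add_const_right _ _ (tendsto_inf_atTop l hab hbc))

lemma gp_le_of_gp_le_of_dist_le_gp (hX : GromovHyperbolic X δ) {x y z a b : X} {s : ℝ}
    (ha : gp x z a ≤ s) (hb : gp y z b ≤ s) (hxy : dist z x ≤ dist z y)
    (hab : dist z x ≤ gp z a b) : gp x z y ≤ s + 2 * δ := by
  have hxa : dist z x - s ≤ gp z x a := by linarith [gp_add_gp_eq_dist z x a]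
  have hyb : dist z x - s ≤ gp z b y := by
    linarith [gp_add_gp_eq_dist z y b, gp_comm z y b]
  have hxb : dist z x - s - δ ≤ gp z x b := by
    have hmin : dist z x - s ≤ min (gp z x a) (gp z a b) :=
      le_min hxa (by linarith [gp_nonneg x z a])
    linarith [hX x a b z]
  have hxy' : dist z x - s - 2 * δ ≤ gp z x y := by
    have hmin : dist z x - s - δ ≤ min (gp z x b) (gp z b y) :=
      le_min hxb (by linarith [hX.nonneg x])
    linarith [hX x b y z]
  linarith [gp_add_gp_eq_dist z x y]

end GromovHyperbolic

section Boundary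

variable {X : Type*} [MetricSpace X] {o : X}

lemma SeqEquiv.refl {u : ℕ → X} (hu : IsGromovSeq o u) : SeqEquiv o u u :=
  show Tendsto (fun n => gp o (u n) (u n)) atTop atTop from hu.comp tendsto_atTop_diagonal

lemma SeqEquiv.symm {u v : ℕ → X} (h : SeqEquiv o u v) : SeqEquiv o v u := by
  simpa only [SeqEquiv, gp_comm] using h

lemma SeqEquiv.trans {δ : ℝ} (hX : GromovHyperbolic X δ) {u v w : ℕ → X}
    (huv : SeqEquiv o u v) (hvw : SeqEquiv o v w) : SeqEquiv o u w :=
  hX.tendsto_gp_trans huv hvw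

lemma IsGromovSeq.tendsto_gp_of_seqEquiv {δ : ℝ} (hX : GromovHyperbolic X δ) {v w : ℕ → X}
    (hv : IsGromovSeq o v) (hvw : SeqEquiv o v w) :
    Tendsto (fun p : ℕ × ℕ => gp o (v p.1) (w p.2)) atTop atTop := by
  have hvw' : Tendsto (fun p : ℕ × ℕ => gp o (v p.2) (w p.2)) atTop atTop := by
    rw [← prod_atTop_atTop_eq]
    exact hvw.comp tendsto_snd
  exact hX.tendsto_gp_trans hv hvw'

lemma exists_seqEquiv_frequently_gp_lt {b p : X} {u : ℕ → X} (hu : IsGromovSeq o u) {t : ℝ}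
    (h : gpB o b p u < t) :
    ∃ v : ℕ → X, IsGromovSeq o v ∧ SeqEquiv o u v ∧ ∃ᶠ n in atTop, gp b p (v n) < t := by
  obtain ⟨L, ⟨v, hv, huv, rfl⟩, hLt⟩ := exists_lt_of_csInf_lt
    (by exact ⟨_, u, hu, .refl hu, rfl⟩) h
  exact ⟨v, hv, huv,
    frequently_lt_of_liminf_lt (isCoboundedUnder_ge_of_le atTop fun n => gp_le_dist b p (v n)) hLt⟩

end Boundary

theorem intersecting_shadows_general {X : Type*} [MetricSpace X] (o : X) (δ₀ : ℝ)
    (hhyp : ∀ x y z w : X, min (gp w x y) (gp w y z) - δ₀ ≤ gp w x z) :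
    ∀ σ : ℝ, 0 < σ → ∃ C : ℝ, ∀ (x y z : X) (u : ℕ → X),
      IsGromovSeq o u → dist z x ≤ dist z y →
      gpB o x z u ≤ σ → gpB o y z u ≤ σ →
      |dist x y - (dist z y - dist z x)| ≤ C := by
  intro σ _
  refine ⟨2 * (σ + 1 + 2 * δ₀), fun x y z u hu hzxy hx hy => ?_⟩
  obtain ⟨v, hv, huv, hvx⟩ := exists_seqEquiv_frequently_gp_lt hu (hx.trans_lt (lt_add_one σ))
  obtain ⟨w, -, huw, hwy⟩ := exists_seqEquiv_frequently_gp_lt hu (hy.trans_lt (lt_add_one σ))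
  have hvw := hv.tendsto_gp_of_seqEquiv hhyp (huv.symm.trans hhyp huw)
  obtain ⟨⟨N, M⟩, hNM⟩ := eventually_atTop.1 (hvw.eventually_ge_atTop (dist z x + dist o z))
  obtain ⟨n, hn, hvn⟩ := frequently_atTop.1 hvx N
  obtain ⟨m, hm, hwm⟩ := frequently_atTop.1 hwy M
  have hgp : gp x z y ≤ σ + 1 + 2 * δ₀ :=
    GromovHyperbolic.gp_le_of_gp_le_of_dist_le_gp hhyp hvn.le hwm.le hzxy
      (by linarith [gp_sub_dist_le_gp o z (v n) (w m), hNM (n, m) (Prod.mk_le_mk.2 ⟨hn, hm⟩)])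
  rw [← two_mul_gp_eq, abs_of_nonneg (by linarith [gp_nonneg x z y])]
  linarith

/-- Intersecting Shadows Lemma: in a `δ₀`-hyperbolic metric space, for every `σ > 0` there
is a constant `C = C(δ₀,σ)` such that whenever `d(z,y) ≥ d(z,x)` and a boundary point `η`
(represented by a Gromov sequence `u`) lies in both shadows `Shad_z(x,σ)` and
`Shad_z(y,σ)`, one has `|d(x,y) - (d(z,y) - d(z,x))| ≤ C`. -/
theorem intersecting_shadows {X : Type*} [MetricSpace X] (o : X) (δ₀ : ℝ) (hδ : 0 ≤ δ₀)
    (hhyp : ∀ x y z w : X, min (gp w x y) (gp w y z) - δ₀ ≤ gp w x z) :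
    ∀ σ : ℝ, 0 < σ → ∃ C : ℝ, ∀ (x y z : X) (u : ℕ → X),
      IsGromovSeq o u → dist z x ≤ dist z y →
      gpB o x z u ≤ σ → gpB o y z u ≤ σ →
      |dist x y - (dist z y - dist z x)| ≤ C :=
  intersecting_shadows_general o δ₀ hhyp
end
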